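/- arXiv:2203.03006 — 5 statements merged into one kernel-verified Lean document; each statement's English description precedes it below -/
import Mathlib

section
/- Let 0 ≤ s < r be fixed integers and let t ≥ 3 be a fixed integer. Then, as n → ∞, the number of monomorphisms from the cycle C_t to the generalized Johnson graph G(n,r,s) satisfies mon(C_t) ~ N·N1·(N1/C(r,s))^{t-2}, i.e. the ratio of the two sides tends to 1. -/
open Filter

/-- Number of graph homomorphisms from the cycle `C_t` to `G`. -/
noncomputable def homCount (t : ℕ) {V : Type*} [Fintype V] (G : SimpleGraph V) : ℕ :=
  Nat.card { f : Fin t → V //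
    ∀ a b, (SimpleGraph.cycleGraph t).Adj a b → G.Adj (f a) (f b) }

/-- Number of injective graph homomorphisms from the cycle `C_t` to `G`. -/
noncomputable def monCount (t : ℕ) {V : Type*} [Fintype V] (G : SimpleGraph V) : ℕ :=
  Nat.card { f : Fin t → V // Function.Injective f ∧
    ∀ a b, (SimpleGraph.cycleGraph t).Adj a b → G.Adj (f a) (f b) }

/-- The generalized Johnson graph `G(n,r,s)`. -/
def johnsonGraph (n r s : ℕ) :
    SimpleGraph {x : Finset (Fin n) // x.card = r} where
  Adj x y := x ≠ y ∧ (x.1 ∩ y.1).card = s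
  symm := ⟨fun x y ⟨hne, h⟩ => ⟨hne.symm, by rwa [Finset.inter_comm]⟩⟩
  loopless := ⟨fun x ⟨hne, _⟩ => hne rfl⟩

/-!
A monomorphism `C_t → G(n,r,s)` is a cyclic sequence of `t` distinct `r`-sets whose consecutive
members meet in `s` points. Adding the sets one at a time, each contributes at most `r - s` new
points, so the union has at most `M = r + (t-1)(r-s)` points; if it has exactly `M`, every set meets
the earlier ones inside its predecessor, and together with the closing edge this forces all pairwise
intersections to be a single `s`-set: the cycle is a sunflower. Sunflowers are counted exactly,
`C(n,s) ∏_{i<t} C(n-s-i(r-s), r-s) ~ n^s/s! (n^(r-s)/(r-s)!)^t`, which is also the asymptotics of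
`N N1 (N1/C(r,s))^(t-2)`; the remaining cycles live on at most `M - 1` points, so there are
`O(n^(M-1))` of them.
-/

open Finset Asymptotics SimpleGraph Function

section DisjointTuples

theorem card_subtype_subset_card_eq {α : Type*} (C : Finset α) (d : ℕ) :
    Nat.card {B : Finset α // B ⊆ C ∧ #B = d} = (#C).choose d := by
  rw [← card_powersetCard, ← Nat.card_eq_finsetCard]
  simp only [mem_powersetCard]

variable {α : Type*} [Fintype α] [DecidableEq α]

def disjointTuplesSuccEquiv (d k : ℕ) (C : Finset α) :
    {A : Fin (k + 1) → Finset α // (∀ i, A i ⊆ C ∧ #(A i) = d) ∧ Pairwise (Disjoint on A)} ≃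
      Σ B : {B : Finset α // B ⊆ C ∧ #B = d},
        {A : Fin k → Finset α // (∀ i, A i ⊆ C \ B.1 ∧ #(A i) = d) ∧ Pairwise (Disjoint on A)} where
  toFun A := ⟨⟨A.1 0, A.2.1 0⟩, ⟨Fin.tail A.1, fun i =>
      ⟨subset_sdiff.2 ⟨(A.2.1 i.succ).1, A.2.2 (Fin.succ_ne_zero i)⟩, (A.2.1 i.succ).2⟩,
      fun _ _ hij => A.2.2 (Fin.succ_injective _ |>.ne hij)⟩⟩
  invFun p := ⟨Fin.cons p.1.1 p.2.1, Fin.cases p.1.2 fun i =>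
      ⟨(subset_sdiff.1 (p.2.2.1 i).1).1, (p.2.2.1 i).2⟩,
      pairwise_fin_succ_iff.2 ⟨fun i => (subset_sdiff.1 (p.2.2.1 i).1).2,
        fun i => (subset_sdiff.1 (p.2.2.1 i).1).2.symm, p.2.2.2⟩⟩
  left_inv A := Subtype.ext (Fin.cons_self_tail A.1)
  right_inv _ := Sigma.subtype_ext rfl rfl

theorem card_disjoint_tuples (d : ℕ) : ∀ (k : ℕ) (C : Finset α),
    Nat.card {A : Fin k → Finset α // (∀ i, A i ⊆ C ∧ #(A i) = d) ∧ Pairwise (Disjoint on A)} =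
      ∏ i ∈ range k, (#C - i * d).choose d
  | 0, C => by
    rw [prod_range_zero, Nat.card_eq_one_iff_unique]
    exact ⟨⟨fun A B => Subtype.ext (funext fun i => i.elim0)⟩,
      ⟨⟨Fin.elim0, fun i => i.elim0, fun i => i.elim0⟩⟩⟩
  | k + 1, C => by
    rw [Nat.card_congr (disjointTuplesSuccEquiv d k C), Nat.card_sigma]
    have hfibre (B : {B : Finset α // B ⊆ C ∧ #B = d}) :
        ∏ i ∈ range k, (#(C \ B.1) - i * d).choose d = ∏ i ∈ range k, (#C - (i + 1) * d).choose d := by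
      rw [card_sdiff_of_subset B.2.1, B.2.2]
      simp_rw [Nat.sub_sub, add_one_mul, add_comm]
    simp_rw [card_disjoint_tuples d k, hfibre, sum_const, card_univ, ← Nat.card_eq_fintype_card,
      card_subtype_subset_card_eq, smul_eq_mul, prod_range_succ', zero_mul, Nat.sub_zero, mul_comm]

end DisjointTuples

def IsSunflower {ι α : Type*} [DecidableEq α] (f : ι → Finset α) (S : Finset α) : Prop :=
  Pairwise fun i j => f i ∩ f j = S

namespace IsSunflower

variable {ι α : Type*} [DecidableEq α] {f : ι → Finset α} {S : Finset α}

theorem kernel_subset [Nontrivial ι] (h : IsSunflower f S) (i : ι) : S ⊆ f i := by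
  obtain ⟨j, hj⟩ := exists_ne i
  exact h hj.symm ▸ inter_subset_left

theorem kernel_unique [Nontrivial ι] {S' : Finset α} (h : IsSunflower f S)
    (h' : IsSunflower f S') : S = S' := by
  obtain ⟨i, j, hij⟩ := exists_pair_ne ι
  exact (h hij).symm.trans (h' hij)

theorem of_pairwise_disjoint {A : ι → Finset α} (hA : Pairwise (Disjoint on A)) :
    IsSunflower (fun i => S ∪ A i) S := fun i j hij => by
  dsimp only
  rw [← union_inter_distrib_left, disjoint_iff_inter_eq_empty.1 (hA hij), union_empty]

end IsSunflower

section Sunflowers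

variable {ι α : Type*} [Fintype α] [DecidableEq α]

def sunflowerPetalsEquiv [Nontrivial ι] {r : ℕ} {S : Finset α} (hS : #S ≤ r) :
    {f : ι → Finset α // (∀ i, #(f i) = r) ∧ IsSunflower f S} ≃
      {A : ι → Finset α // (∀ i, A i ⊆ Sᶜ ∧ #(A i) = r - #S) ∧ Pairwise (Disjoint on A)} where
  toFun f := ⟨fun i => f.1 i \ S, fun i =>
      ⟨fun x hx => mem_compl.2 (mem_sdiff.1 hx).2,
        by rw [card_sdiff_of_subset (f.2.2.kernel_subset i), f.2.1 i]⟩,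
      fun i j hij => disjoint_left.2 fun x hxi hxj =>
        (mem_sdiff.1 hxi).2 (f.2.2 hij ▸ mem_inter.2 ⟨(mem_sdiff.1 hxi).1, (mem_sdiff.1 hxj).1⟩)⟩
  invFun A := ⟨fun i => S ∪ A.1 i, fun i => by
      rw [card_union_of_disjoint (le_compl_iff_disjoint_right.1 (A.2.1 i).1).symm, (A.2.1 i).2]
      omega,
    IsSunflower.of_pairwise_disjoint A.2.2⟩
  left_inv f := Subtype.ext <| funext fun i => union_sdiff_of_subset (f.2.2.kernel_subset i)
  right_inv A := Subtype.ext <| funext fun i =>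
    union_sdiff_cancel_left (le_compl_iff_disjoint_right.1 (A.2.1 i).1).symm

noncomputable def sunflowersEquiv [Nontrivial ι] (r s : ℕ) :
    {f : ι → Finset α // (∀ i, #(f i) = r) ∧ ∃ S, #S = s ∧ IsSunflower f S} ≃
      Σ S : {S : Finset α // #S = s}, {f : ι → Finset α // (∀ i, #(f i) = r) ∧ IsSunflower f S.1} where
  toFun f := ⟨⟨f.2.2.choose, f.2.2.choose_spec.1⟩, ⟨f.1, f.2.1, f.2.2.choose_spec.2⟩⟩
  invFun p := ⟨p.2.1, p.2.2.1, p.1.1, p.1.2, p.2.2.2⟩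
  left_inv _ := rfl
  right_inv p := Sigma.subtype_ext
    (Subtype.ext ((Exists.choose_spec (p := fun S => #S = s ∧ IsSunflower p.2.1 S)
      ⟨p.1.1, p.1.2, p.2.2.2⟩).2.kernel_unique p.2.2.2)) rfl

theorem card_sunflowers {r s k : ℕ} (hsr : s ≤ r) (hk : 2 ≤ k) :
    Nat.card {f : Fin k → Finset α // (∀ i, #(f i) = r) ∧ ∃ S, #S = s ∧ IsSunflower f S} =
      (Fintype.card α).choose s *
        ∏ i ∈ range k, (Fintype.card α - s - i * (r - s)).choose (r - s) := by
  have : Nontrivial (Fin k) := Fin.nontrivial_iff_two_le.2 hk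
  rw [Nat.card_congr (sunflowersEquiv r s), Nat.card_sigma]
  have hfibre (S : {S : Finset α // #S = s}) :
      Nat.card {f : Fin k → Finset α // (∀ i, #(f i) = r) ∧ IsSunflower f S.1} =
        ∏ i ∈ range k, (Fintype.card α - s - i * (r - s)).choose (r - s) := by
    rw [Nat.card_congr (sunflowerPetalsEquiv (S.2.trans_le hsr)), card_disjoint_tuples,
      card_compl, S.2]
  simp_rw [hfibre, sum_const, card_univ, Fintype.card_finset_len, smul_eq_mul]

end Sunflowers

section ChainsOfSets

variable {α : Type*} [DecidableEq α]

theorem card_union_le_add_card_sdiff {U A B : Finset α} (hAU : A ⊆ U) :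
    #(U ∪ B) ≤ #U + #(B \ A) := by
  rw [union_comm, ← card_sdiff_add_card, add_comm]
  exact Nat.add_le_add_left (card_le_card (sdiff_subset_sdiff le_rfl hAU)) _

theorem inter_subset_of_card_union_eq {U A B : Finset α} (hAU : A ⊆ U)
    (h : #(U ∪ B) = #U + #(B \ A)) : B ∩ U ⊆ A := by
  rw [union_comm, ← card_sdiff_add_card, add_comm] at h
  have hBUA : B \ U = B \ A :=
    eq_of_subset_of_card_le (sdiff_subset_sdiff le_rfl hAU) (by omega)
  intro x hx
  by_contra hxA
  have : x ∈ B \ U := hBUA ▸ mem_sdiff.2 ⟨(mem_inter.1 hx).1, hxA⟩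
  exact (mem_sdiff.1 this).2 (mem_inter.1 hx).2

variable {g : ℕ → Finset α} {r s : ℕ}

theorem card_biUnion_range_le (hcard : ∀ k, #(g k) = r) (hstep : ∀ k, #(g k ∩ g (k + 1)) = s) :
    ∀ k, #((range (k + 1)).biUnion g) ≤ r + k * (r - s) ∧
      (#((range (k + 1)).biUnion g) = r + k * (r - s) →
        ∀ i j, i ≤ j → j < k → g i ∩ g (j + 1) ⊆ g j)
  | 0 => by simp [hcard]
  | k + 1 => by
    obtain ⟨ih_le, ih_eq⟩ := card_biUnion_range_le hcard hstep k
    have hsub : g k ⊆ (range (k + 1)).biUnion g := subset_biUnion_of_mem g (self_mem_range_succ k)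
    have hnew : #(g (k + 1) \ g k) = r - s := by
      rw [card_sdiff, hcard, hstep]
    have hunion : (range (k + 1 + 1)).biUnion g = (range (k + 1)).biUnion g ∪ g (k + 1) := by
      rw [range_add_one, biUnion_insert, union_comm]
    have hle := card_union_le_add_card_sdiff (B := g (k + 1)) hsub
    rw [hnew, ← hunion] at hle
    refine ⟨by rw [add_one_mul]; omega, fun heq i j hij hjk => ?_⟩
    rw [add_one_mul] at heq
    have hU : #((range (k + 1)).biUnion g) = r + k * (r - s) := by omega
    rcases Nat.lt_succ_iff_lt_or_eq.1 hjk with hjk | rfl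
    · exact ih_eq hU i j hij hjk
    · have htight := inter_subset_of_card_union_eq hsub (by rw [hnew, ← hunion]; omega)
      intro x hx
      exact htight (mem_inter.2 ⟨(mem_inter.1 hx).2,
        mem_biUnion.2 ⟨i, mem_range.2 (by omega), (mem_inter.1 hx).1⟩⟩)

theorem inter_subset_of_tight {k : ℕ}
    (htight : ∀ i j, i ≤ j → j < k → g i ∩ g (j + 1) ⊆ g j) {j : ℕ} (hjk : j ≤ k) :
    g k ∩ g 0 ⊆ g j := by
  induction hjk using Nat.decreasingInduction with
  | self => exact inter_subset_left
  | of_succ j hjk ih =>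
    exact fun x hx => htight 0 j (Nat.zero_le j) hjk (mem_inter.2 ⟨(mem_inter.1 hx).2, ih hx⟩)

theorem inter_eq_of_tight (hstep : ∀ k, #(g k ∩ g (k + 1)) = s) {k : ℕ}
    (htight : ∀ i j, i ≤ j → j < k → g i ∩ g (j + 1) ⊆ g j) (hclose : #(g k ∩ g 0) = s)
    {i j : ℕ} (hij : i < j) (hjk : j ≤ k) : g i ∩ g j = g k ∩ g 0 := by
  obtain ⟨j, rfl⟩ : ∃ j', j = j' + 1 := ⟨j - 1, by omega⟩
  have hsub : g i ∩ g (j + 1) ⊆ g j ∩ g (j + 1) :=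
    subset_inter (htight i j (by omega) (by omega)) inter_subset_right
  refine eq_of_superset_of_card_ge
    (subset_inter (inter_subset_of_tight htight (by omega)) (inter_subset_of_tight htight hjk)) ?_
  rw [hclose, ← hstep j]
  exact card_le_card hsub

end ChainsOfSets

section CyclesOfSets

open Fin.NatCast

variable {α : Type*} [DecidableEq α] {m r s : ℕ} {f : Fin (m + 2) → Finset α}

theorem biUnion_univ_eq_biUnion_range_natCast :
    univ.biUnion f = (range (m + 2)).biUnion fun k => f k := by
  ext x
  simp only [mem_biUnion, mem_univ, true_and, mem_range]
  exact ⟨fun ⟨i, hi⟩ => ⟨i, i.2, by rwa [Fin.cast_val_eq_self]⟩, fun ⟨k, _, hk⟩ => ⟨k, hk⟩⟩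

theorem card_biUnion_le_of_cycle (hcard : ∀ i, #(f i) = r)
    (hstep : ∀ i, #(f i ∩ f (i + 1)) = s) :
    #(univ.biUnion f) ≤ r + (m + 1) * (r - s) := by
  rw [biUnion_univ_eq_biUnion_range_natCast]
  exact (card_biUnion_range_le (fun k => hcard k)
    (fun k => by simpa only [Nat.cast_succ] using hstep k) (m + 1)).1

theorem isSunflower_of_card_biUnion_eq (hcard : ∀ i, #(f i) = r)
    (hstep : ∀ i, #(f i ∩ f (i + 1)) = s) (heq : #(univ.biUnion f) = r + (m + 1) * (r - s)) :
    IsSunflower f (f (Fin.last (m + 1)) ∩ f 0) := by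
  have hstep' (k : ℕ) : #(f k ∩ f ↑(k + 1)) = s := by simpa only [Nat.cast_succ] using hstep k
  rw [biUnion_univ_eq_biUnion_range_natCast] at heq
  have htight := (card_biUnion_range_le (fun k => hcard k) hstep' (m + 1)).2 heq
  have hclose : #(f ((m + 1 : ℕ) : Fin (m + 2)) ∩ f ((0 : ℕ) : Fin (m + 2))) = s := by
    rw [Fin.natCast_eq_last, Nat.cast_zero, ← Fin.last_add_one]
    exact hstep _
  have hsun {i j : Fin (m + 2)} (hij : i.val < j.val) :
      f i ∩ f j = f (Fin.last (m + 1)) ∩ f 0 := by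
    have := inter_eq_of_tight (g := fun k => f k) hstep' htight hclose hij (Nat.le_of_lt_succ j.2)
    rwa [Fin.cast_val_eq_self, Fin.cast_val_eq_self, Fin.natCast_eq_last, Nat.cast_zero] at this
  intro i j hij
  rcases Fin.lt_or_lt_of_ne hij with h | h
  · exact hsun h
  · rw [inter_comm]; exact hsun h

end CyclesOfSets

theorem card_tuples_card_biUnion_le {ι α : Type*} [Fintype ι] [Fintype α] [DecidableEq α] {L : ℕ}
    (hL : L ≤ Fintype.card α) :
    Nat.card {f : ι → Finset α // #(univ.biUnion f) ≤ L} ≤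
      (Fintype.card α).choose L * (2 ^ L) ^ Fintype.card ι := by
  classical
  have hcover : univ.filter (fun f : ι → Finset α => #(univ.biUnion f) ≤ L) ⊆
      (powersetCard L univ).biUnion fun W => Fintype.piFinset fun _ => W.powerset := by
    intro f hf
    obtain ⟨W, hUW, hW⟩ := exists_superset_card_eq (mem_filter.1 hf).2 hL
    exact mem_biUnion.2 ⟨W, mem_powersetCard.2 ⟨subset_univ W, hW⟩, Fintype.mem_piFinset.2
      fun i => mem_powerset.2 ((subset_biUnion_of_mem f (mem_univ i)).trans hUW)⟩
  rw [Nat.card_eq_fintype_card, Fintype.card_subtype]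
  calc #(univ.filter fun f : ι → Finset α => #(univ.biUnion f) ≤ L)
      ≤ ∑ W ∈ powersetCard L univ, #(Fintype.piFinset fun _ : ι => W.powerset) :=
        (card_le_card hcover).trans card_biUnion_le
    _ = (Fintype.card α).choose L * (2 ^ L) ^ Fintype.card ι := by
        rw [sum_congr rfl fun W hW => by
          rw [Fintype.card_piFinset, prod_const, card_powerset, (mem_powersetCard.1 hW).2,
            card_univ], sum_const, card_powersetCard, card_univ, smul_eq_mul]

theorem Nat.card_subtype_and_add_card_subtype_and_not {α : Type*} [Finite α] (p q : α → Prop) :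
    Nat.card {x // p x ∧ q x} + Nat.card {x // p x ∧ ¬q x} = Nat.card {x // p x} := by
  classical
  rw [Nat.card_congr (Equiv.sumCompl fun y : {x // p x} => q y.1).symm, Nat.card_sum,
    Nat.card_congr (Equiv.subtypeSubtypeEquivSubtypeInter p q),
    Nat.card_congr (Equiv.subtypeSubtypeEquivSubtypeInter p fun x => ¬q x)]

section JohnsonCycles

variable {α : Type*} [DecidableEq α]

def IsJohnsonCycle (r s : ℕ) {t : ℕ} (f : Fin t → Finset α) : Prop :=
  (∀ i, #(f i) = r) ∧ Injective f ∧ ∀ a b, (cycleGraph t).Adj a b → #(f a ∩ f b) = s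

theorem monCount_johnsonGraph (n r s t : ℕ) :
    monCount t (johnsonGraph n r s) =
      Nat.card {f : Fin t → Finset (Fin n) // IsJohnsonCycle r s f} :=
  Nat.card_congr
    { toFun f := ⟨fun i => (f.1 i).1, fun i => (f.1 i).2, Subtype.val_injective.comp f.2.1,
        fun a b hab => (f.2.2 a b hab).2⟩
      invFun g := ⟨fun i => ⟨g.1 i, g.2.1 i⟩, fun _ _ h => g.2.2.1 (congrArg Subtype.val h),
        fun a b hab => ⟨fun h => hab.ne (g.2.2.1 (congrArg Subtype.val h)), g.2.2.2 a b hab⟩⟩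
      left_inv _ := rfl
      right_inv _ := rfl }

variable {m r s : ℕ} {f : Fin (m + 2) → Finset α}

theorem IsJohnsonCycle.card_inter_add_one (hf : IsJohnsonCycle r s f) (i : Fin (m + 2)) :
    #(f i ∩ f (i + 1)) = s :=
  hf.2.2 _ _ (cycleGraph_adj.2 (Or.inr (add_sub_cancel_left i 1)))

theorem IsSunflower.isJohnsonCycle {t : ℕ} {f : Fin t → Finset α} {S : Finset α} (hsr : s < r)
    (hcard : ∀ i, #(f i) = r) (hS : #S = s) (hf : IsSunflower f S) : IsJohnsonCycle r s f := by
  refine ⟨hcard, fun i j hfij => ?_, fun a b hab => (hf hab.ne).symm ▸ hS⟩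
  by_contra hij
  have hfi : f i = S := by simpa [hfij] using hf hij
  have := hcard i
  rw [hfi] at this
  omega

end JohnsonCycles

section JohnsonCycleCounts

variable {α : Type*} [Fintype α] [DecidableEq α] {m r s : ℕ}

theorem card_johnsonCycles_sunflower (hsr : s < r) :
    Nat.card {f : Fin (m + 2) → Finset α // IsJohnsonCycle r s f ∧ ∃ S, #S = s ∧ IsSunflower f S} =
      (Fintype.card α).choose s *
        ∏ i ∈ range (m + 2), (Fintype.card α - s - i * (r - s)).choose (r - s) := by
  rw [← card_sunflowers hsr.le (by omega)]
  exact Nat.card_congr <| Equiv.subtypeEquivRight fun f =>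
    ⟨fun ⟨hf, hsun⟩ => ⟨hf.1, hsun⟩,
      fun ⟨hcard, S, hS, hf⟩ => ⟨hf.isJohnsonCycle hsr hcard hS, S, hS, hf⟩⟩

theorem card_johnsonCycles_not_sunflower_le (hn : r + (m + 1) * (r - s) - 1 ≤ Fintype.card α) :
    Nat.card {f : Fin (m + 2) → Finset α //
        IsJohnsonCycle r s f ∧ ¬∃ S, #S = s ∧ IsSunflower f S} ≤
      (Fintype.card α).choose (r + (m + 1) * (r - s) - 1) *
        (2 ^ (r + (m + 1) * (r - s) - 1)) ^ (m + 2) := by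
  have hsmall (f : Fin (m + 2) → Finset α)
      (hf : IsJohnsonCycle r s f ∧ ¬∃ S, #S = s ∧ IsSunflower f S) :
      #(univ.biUnion f) ≤ r + (m + 1) * (r - s) - 1 := by
    have hle := card_biUnion_le_of_cycle hf.1.1 hf.1.card_inter_add_one
    suffices #(univ.biUnion f) ≠ r + (m + 1) * (r - s) by omega
    intro heq
    refine hf.2 ⟨_, ?_, isSunflower_of_card_biUnion_eq hf.1.1 hf.1.card_inter_add_one heq⟩
    simpa using hf.1.card_inter_add_one (Fin.last (m + 1))
  calc _ ≤ Nat.card {f : Fin (m + 2) → Finset α //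
          #(univ.biUnion f) ≤ r + (m + 1) * (r - s) - 1} :=
        Nat.card_le_card_of_injective _ (Subtype.impEmbedding _ _ hsmall).injective
    _ ≤ _ := by simpa using card_tuples_card_biUnion_le (ι := Fin (m + 2)) hn

end JohnsonCycleCounts

section Asymptotics

open Nat

theorem isEquivalent_choose_sub (a k : ℕ) :
    (fun n : ℕ => ((n - a).choose k : ℝ)) ~[atTop] fun n => (n : ℝ) ^ k / k ! := by
  have hsub : (fun n : ℕ => ((n - a : ℕ) : ℝ)) ~[atTop] fun n => (n : ℝ) := by
    refine (IsEquivalent.refl.sub_isLittleO ((isLittleO_const_id_atTop (a : ℝ)).comp_tendsto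
      tendsto_natCast_atTop_atTop)).congr_left ?_
    filter_upwards [eventually_ge_atTop a] with n hn
    simp [Nat.cast_sub hn]
  exact ((isEquivalent_choose k).comp_tendsto (tendsto_sub_atTop_nat a)).trans
    ((hsub.pow k).div IsEquivalent.refl)

theorem isEquivalent_choose_mul_prod_choose (s d k : ℕ) :
    (fun n : ℕ => ((n.choose s * ∏ i ∈ range k, (n - s - i * d).choose d : ℕ) : ℝ)) ~[atTop]
      fun n => (n : ℝ) ^ s / s ! * ((n : ℝ) ^ d / d !) ^ k := by
  have hprod := IsEquivalent.finsetProd (s := range k) (l := atTop)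
    fun i _ => isEquivalent_choose_sub (s + i * d) d
  simp only [prod_const, card_range] at hprod
  push_cast
  simp only [Nat.sub_sub]
  exact (isEquivalent_choose s).mul hprod

theorem isEquivalent_choose_mul_pow_choose_sub {r s : ℕ} (hsr : s ≤ r) (k : ℕ) :
    (fun n : ℕ => (n.choose r : ℝ) * r.choose s * ((n - r).choose (r - s) : ℝ) ^ (k + 1))
      ~[atTop] fun n => (n : ℝ) ^ s / s ! * ((n : ℝ) ^ (r - s) / (r - s)!) ^ (k + 2) := by
  refine (((isEquivalent_choose r).mul IsEquivalent.refl).mul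
    ((isEquivalent_choose_sub r (r - s)).pow (k + 1))).congr_right (Eventually.of_forall fun n => ?_)
  obtain ⟨d, rfl⟩ : ∃ d, r = s + d := ⟨r - s, by omega⟩
  have hfact : ((s + d).choose s * s ! * d ! : ℝ) = (s + d)! := by
    have := Nat.choose_mul_factorial_mul_factorial (Nat.le_add_right s d)
    rw [Nat.add_sub_cancel_left] at this
    exact_mod_cast this
  have hchoose : ((s + d).choose s : ℝ) ≠ 0 :=
    Nat.cast_ne_zero.2 (Nat.choose_pos (Nat.le_add_right s d)).ne'
  simp only [Pi.mul_apply, Pi.pow_apply, Nat.add_sub_cancel_left, ← hfact]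
  simp only [div_eq_mul_inv, pow_add, mul_pow, inv_pow]
  field_simp

theorem isLittleO_card_johnsonCycles_not_sunflower {r s : ℕ} (hsr : s < r) (m : ℕ) :
    (fun n : ℕ => (Nat.card {f : Fin (m + 2) → Finset (Fin n) //
        IsJohnsonCycle r s f ∧ ¬∃ S, #S = s ∧ IsSunflower f S} : ℝ)) =o[atTop]
      fun n => (n : ℝ) ^ s / s ! * ((n : ℝ) ^ (r - s) / (r - s)!) ^ (m + 2) := by
  set L := r + (m + 1) * (r - s) - 1 with hL
  have hbound : (fun n : ℕ => (Nat.card {f : Fin (m + 2) → Finset (Fin n) //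
      IsJohnsonCycle r s f ∧ ¬∃ S, #S = s ∧ IsSunflower f S} : ℝ)) =O[atTop]
        fun n => (n : ℝ) ^ L := by
    refine IsBigO.of_bound (((2 : ℝ) ^ L) ^ (m + 2)) ?_
    filter_upwards [eventually_ge_atTop L] with n hn
    have h := card_johnsonCycles_not_sunflower_le (α := Fin n) (m := m) (r := r) (s := s)
      (by rw [Fintype.card_fin]; exact hn)
    rw [Fintype.card_fin] at h
    replace h := h.trans (Nat.mul_le_mul_right _ (Nat.choose_le_pow n L))
    simp only [Real.norm_natCast, norm_pow]
    rw [mul_comm]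
    exact_mod_cast h
  have hexp : L + 1 = s + (r - s) * (m + 2) := by
    have : (r - s) * (m + 2) = (m + 1) * (r - s) + (r - s) := by ring
    omega
  have hφ : (fun n : ℕ => (n : ℝ) ^ s / s ! * ((n : ℝ) ^ (r - s) / (r - s)!) ^ (m + 2)) =
      fun n : ℕ => (s ! * (r - s)! ^ (m + 2) : ℝ)⁻¹ * (n : ℝ) ^ (L + 1) := by
    ext n
    rw [hexp, pow_add (n : ℝ), pow_mul (n : ℝ), div_pow]
    field_simp
  rw [hφ]
  exact hbound.trans_isLittleO <| ((isLittleO_pow_pow_atTop_of_lt (Nat.lt_succ_self L)).comp_tendsto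
    tendsto_natCast_atTop_atTop).trans_isBigO (isBigO_self_const_mul (by positivity) _ _)

end Asymptotics

/-- Burkin's theorem: for fixed `0 ≤ s < r` and fixed `t ≥ 3`,
`mon(C_t) ~ N · N1 · (N1 / C(r,s))^(t-2)` as `n → ∞`. -/
theorem stmt_0 (r s t : ℕ) (hs : s < r) (ht : 3 ≤ t) :
    Tendsto (fun n : ℕ =>
      (monCount t (johnsonGraph n r s) : ℝ) /
        ((n.choose r : ℝ) * ((r.choose s : ℝ) * ((n - r).choose (r - s) : ℝ)) *
          (((r.choose s : ℝ) * ((n - r).choose (r - s) : ℝ)) / (r.choose s : ℝ)) ^ (t - 2)))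
      atTop (nhds 1) := by
  obtain ⟨m, rfl⟩ : ∃ m, t = m + 2 := ⟨t - 2, by omega⟩
  have hmon : (fun n : ℕ => (monCount (m + 2) (johnsonGraph n r s) : ℝ)) ~[atTop]
      fun n => (n : ℝ) ^ s / s.factorial * ((n : ℝ) ^ (r - s) / (r - s).factorial) ^ (m + 2) := by
    have hsplit (n : ℕ) : monCount (m + 2) (johnsonGraph n r s) =
        n.choose s * ∏ i ∈ range (m + 2), (n - s - i * (r - s)).choose (r - s) +
          Nat.card {f : Fin (m + 2) → Finset (Fin n) //
            IsJohnsonCycle r s f ∧ ¬∃ S, #S = s ∧ IsSunflower f S} := by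
      rw [monCount_johnsonGraph, ← Nat.card_subtype_and_add_card_subtype_and_not _
        fun f => ∃ S, #S = s ∧ IsSunflower f S, card_johnsonCycles_sunflower hs, Fintype.card_fin]
    simp_rw [hsplit, Nat.cast_add]
    exact (isEquivalent_choose_mul_prod_choose s (r - s) (m + 2)).add_isLittleO
      (isLittleO_card_johnsonCycles_not_sunflower hs m)
  have hden := isEquivalent_choose_mul_pow_choose_sub hs.le m
  have hchoose : (r.choose s : ℝ) ≠ 0 := Nat.cast_ne_zero.2 (Nat.choose_pos hs.le).ne'
  refine (isEquivalent_iff_tendsto_one ?_).1 (hmon.trans hden.symm) |>.congr fun n => ?_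
  · filter_upwards [hden.eventually_pos (eventually_gt_atTop 0 |>.mono fun n hn => by positivity)]
      with n hn using hn.ne'
  · simp only [Pi.div_apply, Nat.add_sub_cancel, mul_div_cancel_left₀ _ hchoose]
    ring
end

section
/- Let G be a vertex-transitive finite simple graph on N vertices with adjacency matrix A, let t ≥ 4 be an integer, and let x be any vertex of G. Then 0 ≤ hom(C_t, G) − mon(C_t, G) ≤ t · N · Σ_{k=2}^{t−2} (A^k)_{xx} · (A^{t−k})_{xx}. -/
open Filter

/-! A non-injective homomorphism `f : C_t → G` has `f a = f b` for some `a < b`. Reading `f`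
around the cycle from `a` gives a closed walk of length `t` at `f a` that returns to `f a` after
`k = b - a` steps, and looplessness of `G` forces `2 ≤ k ≤ t - 2`. So `f` is determined by `a`, `k`
and two closed walks at `f a` of lengths `k` and `t - k`, of which there are
`(A^k)_{vv} (A^{t-k})_{vv}` at `v = f a`. Vertex-transitivity makes these diagonal entries
independent of `v`. -/

open Finset

namespace SimpleGraph

variable {V : Type*} {G : SimpleGraph V}

namespace Walk

def ofSeq (g : ℕ → V) (hg : ∀ i, G.Adj (g i) (g (i + 1))) : (n : ℕ) → G.Walk (g 0) (g n)
  | 0 => nil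
  | n + 1 => cons (hg 0) (ofSeq (fun i => g (i + 1)) (fun i => hg (i + 1)) n)

@[simp]
theorem length_ofSeq (g : ℕ → V) (hg : ∀ i, G.Adj (g i) (g (i + 1))) (n : ℕ) :
    (ofSeq g hg n).length = n := by
  induction n generalizing g with
  | zero => rfl
  | succ n ih => simp [ofSeq, ih]

theorem getVert_ofSeq (g : ℕ → V) (hg : ∀ i, G.Adj (g i) (g (i + 1))) {n i : ℕ} (hi : i ≤ n) :
    (ofSeq g hg n).getVert i = g i := by
  induction n generalizing g i with
  | zero => rw [Nat.le_zero.1 hi]; rfl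
  | succ n ih =>
    cases i with
    | zero => rfl
    | succ i => exact ih _ _ (by omega)

end Walk

theorem exists_closedWalks_append_getVert_eq (g : ℕ → V) (hg : ∀ i, G.Adj (g i) (g (i + 1)))
    {k n : ℕ} (hkn : k ≤ n) (hk : g k = g 0) (hn : g n = g 0) :
    ∃ p q : G.Walk (g 0) (g 0), p.length = k ∧ q.length = n - k ∧
      ∀ i ≤ n, (p.append q).getVert i = g i := by
  have hn' : g (k + (n - k)) = g 0 := by rwa [Nat.add_sub_cancel' hkn]
  refine ⟨(Walk.ofSeq g hg k).copy rfl hk,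
    (Walk.ofSeq (fun i => g (k + i)) (fun i => hg (k + i)) (n - k)).copy hk hn', by simp,
    by simp, fun i hi => ?_⟩
  rw [Walk.getVert_append]
  split_ifs with hik
  · simpa using Walk.getVert_ofSeq g hg (by simpa using hik.le)
  · simp only [Walk.length_copy, Walk.length_ofSeq, Walk.getVert_copy] at hik ⊢
    rw [Walk.getVert_ofSeq _ _ (by omega), Nat.add_sub_cancel' (by omega)]

theorem Iso.adjMatrix_pow_apply {W : Type*} [Fintype V] [Fintype W] [DecidableEq V]
    [DecidableEq W] {H : SimpleGraph W} [DecidableRel G.Adj] [DecidableRel H.Adj]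
    (R : Type*) [Semiring R] (φ : G ≃g H) (n : ℕ) (u v : V) :
    (H.adjMatrix R ^ n) (φ u) (φ v) = (G.adjMatrix R ^ n) u v := by
  rw [← Iso.reindex_adjMatrix R φ, ← Matrix.coe_reindexAlgEquiv ℕ R, ← map_pow]
  simp

theorem card_finsetWalkLength [Fintype V] [DecidableEq V] [DecidableRel G.Adj] (n : ℕ) (u v : V) :
    #(G.finsetWalkLength n u v) = (G.adjMatrix ℕ ^ n) u v := by
  rw [adjMatrix_pow_apply_eq_card_walk, card_set_walk_length_eq, Nat.cast_id]

def IsCycleHom (t : ℕ) (G : SimpleGraph V) (f : Fin t → V) : Prop :=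
  ∀ a b, (cycleGraph t).Adj a b → G.Adj (f a) (f b)

open Fin.NatCast in
theorem IsCycleHom.exists_closedWalks_of_not_injective {t : ℕ} {f : Fin t → V}
    (hf : IsCycleHom t G f) (hni : ¬ Function.Injective f) :
    ∃ k ∈ Icc 2 (t - 2), ∃ (a : Fin t) (v : V) (p q : G.Walk v v),
      p.length = k ∧ q.length = t - k ∧ ∀ j, f j = (p.append q).getVert (j - a).val := by
  obtain ⟨a, b, hab, hfab⟩ : ∃ a b : Fin t, a < b ∧ f a = f b := by
    obtain ⟨a, b, hfab, hne⟩ := Function.not_injective_iff.1 hni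
    rcases hne.lt_or_gt with h | h
    exacts [⟨a, b, h, hfab⟩, ⟨b, a, h, hfab.symm⟩]
  have hlt : (a : ℕ) < b := hab
  obtain ⟨n, rfl⟩ : ∃ n, t = n + 2 := ⟨t - 2, by have := b.isLt; omega⟩
  set g : ℕ → V := fun i => f (a + (i : Fin (n + 2)))
  have hg : ∀ i, G.Adj (g i) (g (i + 1)) := fun i =>
    hf _ _ (by rw [cycleGraph_adj, Nat.cast_succ, ← add_assoc, add_sub_cancel_left]; simp)
  have hgk : g (b - a : ℕ) = g 0 := by
    have hb : a + ((b - a : ℕ) : Fin (n + 2)) = b := Fin.ext <| by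
      rw [Fin.val_add, Fin.val_natCast, Nat.mod_eq_of_lt (show (b - a : ℕ) < n + 2 by omega),
        Nat.mod_eq_of_lt (by omega)]
      omega
    simp [g, hb, hfab]
  have hgt : g (n + 2) = g 0 := by simp [g]
  have hk_ne_one : (b - a : ℕ) ≠ 1 := fun h => G.ne_of_adj (hg 0) (by rw [← hgk, h])
  have hk_ne_pred : (b - a : ℕ) ≠ n + 1 := fun h =>
    G.ne_of_adj (hg (n + 1)) (by rw [hgt, ← hgk, h])
  obtain ⟨p, q, hp, hq, hpq⟩ := exists_closedWalks_append_getVert_eq g hg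
    (show (b - a : ℕ) ≤ n + 2 by omega) hgk hgt
  refine ⟨b - a, mem_Icc.2 ⟨by omega, by omega⟩, a, g 0, p, q, hp, hq, fun j => ?_⟩
  rw [hpq _ (j - a).isLt.le]
  simp [g]

variable [Fintype V]

theorem homCount_eq_monCount_add (t : ℕ) (G : SimpleGraph V) :
    homCount t G = monCount t G +
      Nat.card {f : Fin t → V // IsCycleHom t G f ∧ ¬ Function.Injective f} := by
  classical
  simp only [homCount, monCount, Nat.card_eq_fintype_card, Fintype.card_subtype]
  rw [← card_filter_add_card_filter_not (p := Function.Injective)]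
  simp only [filter_filter, and_comm, IsCycleHom]

theorem card_cycleHom_not_injective_le [DecidableEq V] [DecidableRel G.Adj] (t : ℕ) :
    Nat.card {f : Fin t → V // IsCycleHom t G f ∧ ¬ Function.Injective f} ≤
      t * ∑ k ∈ Icc 2 (t - 2), ∑ v, (G.adjMatrix ℕ ^ k) v v * (G.adjMatrix ℕ ^ (t - k)) v v := by
  classical
  let D : Finset (Σ _ : ℕ, Fin t × Σ v : V, G.Walk v v × G.Walk v v) :=
    (Icc 2 (t - 2)).sigma fun k => univ ×ˢ univ.sigma fun v =>
      G.finsetWalkLength k v v ×ˢ G.finsetWalkLength (t - k) v v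
  let glue : (Σ _ : ℕ, Fin t × Σ v : V, G.Walk v v × G.Walk v v) → Fin t → V :=
    fun s j => (s.2.2.2.1.append s.2.2.2.2).getVert (j - s.2.1).val
  have hsub : ({f | IsCycleHom t G f ∧ ¬ Function.Injective f} : Finset _) ⊆ D.image glue := by
    intro f hf
    obtain ⟨hom, hni⟩ := (mem_filter.1 hf).2
    obtain ⟨k, hk, a, v, p, q, hp, hq, hpq⟩ := hom.exists_closedWalks_of_not_injective hni
    exact mem_image.2 ⟨⟨k, a, v, p, q⟩, by simp [D, hk, mem_finsetWalkLength_iff, hp, hq],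
      (funext hpq).symm⟩
  calc Nat.card {f : Fin t → V // IsCycleHom t G f ∧ ¬ Function.Injective f}
      = #{f | IsCycleHom t G f ∧ ¬ Function.Injective f} := by
        rw [Nat.card_eq_fintype_card, Fintype.card_subtype]
    _ ≤ #(D.image glue) := card_le_card hsub
    _ ≤ #D := card_image_le
    _ = _ := by simp [D, card_sigma, card_product, card_finsetWalkLength, mul_sum]

end SimpleGraph

open SimpleGraph in
theorem stmt_11_general {V : Type*} [Fintype V] [DecidableEq V] (G : SimpleGraph V)
    [DecidableRel G.Adj]
    (hvt : ∀ x y : V, ∃ φ : G ≃g G, φ x = y)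
    (t : ℕ) (x : V) :
    (0 : ℤ) ≤ (homCount t G : ℤ) - (monCount t G : ℤ) ∧
      (homCount t G : ℤ) - (monCount t G : ℤ) ≤
        (t : ℤ) * (Fintype.card V : ℤ) *
          ∑ k ∈ Finset.Icc 2 (t - 2),
            (((G.adjMatrix ℕ) ^ k) x x : ℤ) * (((G.adjMatrix ℕ) ^ (t - k)) x x : ℤ) := by
  have hdiag : ∀ n v, (G.adjMatrix ℕ ^ n) v v = (G.adjMatrix ℕ ^ n) x x := fun n v => by
    obtain ⟨φ, rfl⟩ := hvt x v
    exact Iso.adjMatrix_pow_apply ℕ φ n x x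
  have hbound := card_cycleHom_not_injective_le (G := G) t
  simp only [hdiag, sum_const, card_univ, smul_eq_mul, ← mul_sum] at hbound
  rw [homCount_eq_monCount_add, Nat.cast_add, add_sub_cancel_left, mul_assoc]
  exact ⟨by positivity, by exact_mod_cast hbound⟩

/-- For a vertex-transitive graph `G` on `N` vertices, any vertex `x` and `t ≥ 4`:
`0 ≤ hom(C_t,G) − mon(C_t,G) ≤ t · N · Σ_{k=2}^{t−2} (A^k)_{xx} · (A^{t−k})_{xx}`. -/
theorem stmt_11 {V : Type*} [Fintype V] [DecidableEq V] (G : SimpleGraph V)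
    [DecidableRel G.Adj]
    (hvt : ∀ x y : V, ∃ φ : G ≃g G, φ x = y)
    (t : ℕ) (ht : 4 ≤ t) (x : V) :
    (0 : ℤ) ≤ (homCount t G : ℤ) - (monCount t G : ℤ) ∧
      (homCount t G : ℤ) - (monCount t G : ℤ) ≤
        (t : ℤ) * (Fintype.card V : ℤ) *
          ∑ k ∈ Finset.Icc 2 (t - 2),
            (((G.adjMatrix ℕ) ^ k) x x : ℤ) * (((G.adjMatrix ℕ) ^ (t - k)) x x : ℤ) :=
  stmt_11_general G hvt t x
end

section
/- Let 1 ≤ s < r be fixed integers and let j ∈ {1,…,s}. Define λ_j(n) = Σ_{ℓ=max{0,j−s}}^{min{j,r−s}} (−1)^ℓ·C(j,ℓ)·C(r−j, r−s−ℓ)·C(n−r−j, r−s−ℓ) and N1(n) = C(r,s)·C(n−r,r−s). Then there exist a constant C > 0 and n0 such that for all n ≥ n0, |λ_j(n)/N1(n) − C(r−j,s−j)/C(r,s)| ≤ C/n; in particular λ_j(n)/N1(n) → C(r−j,s−j)/C(r,s) as n → ∞. -/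
/-!
For `j ≤ s` the sum defining `λ_j(n)` starts at `ℓ = 0`, and its `ℓ`-th term is a constant
times `C(n-r-j, r-s-ℓ) = O(n^(r-s-ℓ))`. So only the `ℓ = 0` term `C(r-j, r-s)·C(n-r-j, r-s)`
has the full degree `r - s`, and it differs from `C(r-j, r-s)·C(n-r, r-s)` by `O(n^(r-s-1))`.
Since `N1(n) = C(r,s)·C(n-r, r-s)` grows like `n^(r-s)`, the ratio is
`C(r-j, r-s)/C(r,s) + O(1/n)`, and `C(r-j, r-s) = C(r-j, s-j)`.
-/

open Filter

/-- The eigenvalues `λ_j` of the adjacency matrix of `G(n,r,s)`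
(here `max{0, j-s}` is the truncated subtraction `j - s`). -/
def johnsonEigenvalue (n r s j : ℕ) : ℤ :=
  ∑ ℓ ∈ Finset.Icc (j - s) (min j (r - s)),
    (-1 : ℤ) ^ ℓ * (j.choose ℓ : ℤ) * ((r - j).choose (r - s - ℓ) : ℤ) *
      ((n - r - j).choose (r - s - ℓ) : ℤ)

open Asymptotics
open scoped Nat

theorem Nat.choose_add_le_choose_add_mul_pow (a b k : ℕ) :
    (a + b).choose (k + 1) ≤ a.choose (k + 1) + b * (a + b) ^ k := by
  induction b with
  | zero => simp
  | succ b ih =>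
    rw [← add_assoc, Nat.choose_succ_succ', add_mul, one_mul]
    have h₁ : (a + b).choose k ≤ (a + b + 1) ^ k :=
      (Nat.choose_le_pow _ _).trans (Nat.pow_le_pow_left (by omega) _)
    have h₂ : b * (a + b) ^ k ≤ b * (a + b + 1) ^ k :=
      Nat.mul_le_mul_left _ (Nat.pow_le_pow_left (by omega) _)
    omega

theorem isBigO_choose_of_le {m : ℕ → ℕ} {i p : ℕ} (hm : ∀ n, m n ≤ n) (hi : i ≤ p) :
    (fun n => ((m n).choose i : ℝ)) =O[atTop] (fun n => (n : ℝ) ^ p) := by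
  refine IsBigO.of_bound 1 ?_
  filter_upwards [eventually_ge_atTop 1] with n hn
  simp only [Real.norm_natCast, norm_pow, one_mul]
  exact_mod_cast (Nat.choose_le_pow _ _).trans
    ((Nat.pow_le_pow_left (hm n) i).trans (Nat.pow_le_pow_right hn hi))

theorem isBigO_choose_sub_sub_choose_sub_sub (a b k : ℕ) :
    (fun n : ℕ => ((n - a).choose k : ℝ) - ((n - a - b).choose k : ℝ)) =O[atTop]
      (fun n => (n : ℝ) ^ (k - 1)) := by
  cases k with
  | zero =>
    simp only [Nat.choose_zero_right, sub_self]
    exact isBigO_zero _ _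
  | succ k =>
    refine IsBigO.of_bound b ?_
    filter_upwards [eventually_ge_atTop (a + b)] with n hn
    have hle := Nat.choose_add_le_choose_add_mul_pow (n - a - b) b k
    rw [show n - a - b + b = n - a by omega] at hle
    have hmono : (n - a - b).choose (k + 1) ≤ (n - a).choose (k + 1) :=
      Nat.choose_le_choose _ (by omega)
    have hpow : ((n - a : ℕ) : ℝ) ^ k ≤ (n : ℝ) ^ k := by
      gcongr
      exact_mod_cast Nat.sub_le n a
    rw [Real.norm_of_nonneg (sub_nonneg.2 (by exact_mod_cast hmono))]
    simp only [norm_pow, Real.norm_natCast, Nat.add_sub_cancel]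
    have hle' : ((n - a).choose (k + 1) : ℝ) ≤
        (n - a - b).choose (k + 1) + b * ((n - a : ℕ) : ℝ) ^ k := by
      exact_mod_cast hle
    nlinarith [mul_le_mul_of_nonneg_left hpow (Nat.cast_nonneg (α := ℝ) b)]

theorem isBigO_pow_choose_sub (a k : ℕ) :
    (fun n : ℕ => (n : ℝ) ^ k) =O[atTop] (fun n => ((n - a).choose k : ℝ)) := by
  refine IsBigO.of_bound (2 ^ k * k !) ?_
  filter_upwards [eventually_ge_atTop (2 * (a + k))] with n hn
  simp only [norm_pow, Real.norm_natCast]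
  have hhalf : (n : ℝ) ≤ 2 * ((n - a + 1 - k : ℕ) : ℝ) := by
    exact_mod_cast (by omega : n ≤ 2 * (n - a + 1 - k))
  have hlow : ((n - a + 1 - k : ℕ) : ℝ) ^ k ≤ k ! * ((n - a).choose k : ℝ) := by
    rw [← div_le_iff₀' (by positivity)]
    exact Nat.pow_le_choose k (n - a)
  calc (n : ℝ) ^ k ≤ (2 * ((n - a + 1 - k : ℕ) : ℝ)) ^ k := by gcongr
    _ = 2 ^ k * ((n - a + 1 - k : ℕ) : ℝ) ^ k := mul_pow _ _ _
    _ ≤ 2 ^ k * (k ! * ((n - a).choose k : ℝ)) := by gcongr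
    _ = 2 ^ k * k ! * ((n - a).choose k : ℝ) := by ring

theorem isBigO_div_inv_of_isBigO_pow {f g : ℕ → ℝ} {p : ℕ}
    (hf : f =O[atTop] (fun n : ℕ => (n : ℝ) ^ p))
    (hg : (fun n : ℕ => (n : ℝ) ^ (p + 1)) =O[atTop] g) :
    (fun n => f n / g n) =O[atTop] (fun n => (n : ℝ)⁻¹) := by
  have hginv : (fun n => (g n)⁻¹) =O[atTop] (fun n => ((n : ℝ) ^ (p + 1))⁻¹) :=
    hg.inv_rev <| by
      filter_upwards [eventually_ne_atTop 0] with n hn hzero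
      exact absurd hzero (by positivity)
  simp only [div_eq_mul_inv]
  refine (hf.mul hginv).trans_eventuallyEq ?_
  filter_upwards [eventually_ne_atTop 0] with n hn
  have hn' : (n : ℝ) ≠ 0 := Nat.cast_ne_zero.2 hn
  field_simp
  ring

theorem Asymptotics.IsBigO.exists_pos_abs_le_div {f : ℕ → ℝ}
    (h : f =O[atTop] (fun n : ℕ => (n : ℝ)⁻¹)) :
    ∃ C > (0 : ℝ), ∃ n₀ : ℕ, ∀ n ≥ n₀, |f n| ≤ C / n := by
  obtain ⟨C, hC, hfC⟩ := h.exists_pos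
  obtain ⟨n₀, hn₀⟩ := eventually_atTop.1 hfC.bound
  refine ⟨C, hC, n₀, fun n hn => ?_⟩
  simpa [div_eq_mul_inv] using hn₀ n hn

theorem johnsonEigenvalue_eq_add_sum_Ioc {n r s j : ℕ} (hjs : j ≤ s) :
    (johnsonEigenvalue n r s j : ℝ) =
      ((r - j).choose (r - s) : ℝ) * ((n - r - j).choose (r - s) : ℝ) +
        ∑ ℓ ∈ Finset.Ioc 0 (min j (r - s)),
          (-1 : ℝ) ^ ℓ * (j.choose ℓ : ℝ) * ((r - j).choose (r - s - ℓ) : ℝ) *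
            ((n - r - j).choose (r - s - ℓ) : ℝ) := by
  rw [johnsonEigenvalue, Nat.sub_eq_zero_of_le hjs,
    ← Finset.add_sum_Ioc_eq_sum_Icc (Nat.zero_le _)]
  push_cast
  simp

theorem isBigO_johnsonEigenvalue_sub (r s j : ℕ) (hjs : j ≤ s) :
    (fun n : ℕ => (johnsonEigenvalue n r s j : ℝ) -
        ((r - j).choose (r - s) : ℝ) * ((n - r).choose (r - s) : ℝ)) =O[atTop]
      (fun n => (n : ℝ) ^ (r - s - 1)) := by
  have hshift : (fun n : ℕ => ((r - j).choose (r - s) : ℝ) *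
      -(((n - r).choose (r - s) : ℝ) - ((n - r - j).choose (r - s) : ℝ))) =O[atTop]
      (fun n => (n : ℝ) ^ (r - s - 1)) :=
    (isBigO_choose_sub_sub_choose_sub_sub r j (r - s)).neg_left.const_mul_left _
  have htail : (fun n : ℕ => ∑ ℓ ∈ Finset.Ioc 0 (min j (r - s)),
      (-1 : ℝ) ^ ℓ * (j.choose ℓ : ℝ) * ((r - j).choose (r - s - ℓ) : ℝ) *
        ((n - r - j).choose (r - s - ℓ) : ℝ)) =O[atTop]
      (fun n => (n : ℝ) ^ (r - s - 1)) := by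
    refine IsBigO.sum (fun ℓ hℓ => ?_) |>.congr_left fun n => Finset.sum_apply n _ _
    have hℓ := Finset.mem_Ioc.1 hℓ
    exact (isBigO_choose_of_le (m := fun n => n - r - j) (fun n => by omega)
      (by omega)).const_mul_left _
  refine (hshift.add htail).congr_left fun n => ?_
  rw [johnsonEigenvalue_eq_add_sum_Ioc hjs]
  ring

theorem isBigO_johnsonEigenvalue_div_sub {r s j : ℕ} (hs : s < r) (hjs : j ≤ s) :
    (fun n : ℕ => (johnsonEigenvalue n r s j : ℝ) /
        ((r.choose s : ℝ) * ((n - r).choose (r - s) : ℝ)) -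
          ((r - j).choose (s - j) : ℝ) / (r.choose s : ℝ)) =O[atTop]
      (fun n => (n : ℝ)⁻¹) := by
  have hsymm : (r - j).choose (s - j) = (r - j).choose (r - s) := by
    rw [← Nat.choose_symm (by omega : s - j ≤ r - j)]
    congr 1
    omega
  have hchoose : (r.choose s : ℝ) ≠ 0 := Nat.cast_ne_zero.2 (Nat.choose_pos hs.le).ne'
  have hden : (fun n : ℕ => (n : ℝ) ^ (r - s - 1 + 1)) =O[atTop]
      (fun n => (r.choose s : ℝ) * ((n - r).choose (r - s) : ℝ)) := by
    rw [Nat.sub_add_cancel (by omega : 1 ≤ r - s)]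
    exact (isBigO_pow_choose_sub r (r - s)).const_mul_right hchoose
  refine (isBigO_div_inv_of_isBigO_pow (isBigO_johnsonEigenvalue_sub r s j hjs) hden).congr'
    ?_ EventuallyEq.rfl
  filter_upwards [eventually_ge_atTop (r + (r - s))] with n hn
  have hN : ((n - r).choose (r - s) : ℝ) ≠ 0 :=
    Nat.cast_ne_zero.2 (Nat.choose_pos (by omega)).ne'
  rw [hsymm]
  field_simp

theorem stmt_13_general (r s j : ℕ) (hs : s < r) (hjs : j ≤ s) :
    (∃ C > (0 : ℝ), ∃ n₀ : ℕ, ∀ n ≥ n₀,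
      |(johnsonEigenvalue n r s j : ℝ) /
          ((r.choose s : ℝ) * ((n - r).choose (r - s) : ℝ)) -
        ((r - j).choose (s - j) : ℝ) / (r.choose s : ℝ)| ≤ C / n) ∧
    Tendsto (fun n : ℕ =>
        (johnsonEigenvalue n r s j : ℝ) /
          ((r.choose s : ℝ) * ((n - r).choose (r - s) : ℝ)))
      atTop (nhds (((r - j).choose (s - j) : ℝ) / (r.choose s : ℝ))) := by
  have h := isBigO_johnsonEigenvalue_div_sub hs hjs
  exact ⟨h.exists_pos_abs_le_div,
    tendsto_sub_nhds_zero_iff.1 (h.trans_tendsto tendsto_inv_atTop_nhds_zero_nat)⟩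

/-- For fixed `1 ≤ s < r` and `j ∈ {1,…,s}`, `λ_j(n)/N1(n) = C(r−j,s−j)/C(r,s) + O(1/n)`;
in particular `λ_j(n)/N1(n) → C(r−j,s−j)/C(r,s)` as `n → ∞`. -/
theorem stmt_13 (r s j : ℕ) (hs1 : 1 ≤ s) (hs : s < r) (hj1 : 1 ≤ j) (hjs : j ≤ s) :
    (∃ C > (0 : ℝ), ∃ n₀ : ℕ, ∀ n ≥ n₀,
      |(johnsonEigenvalue n r s j : ℝ) /
          ((r.choose s : ℝ) * ((n - r).choose (r - s) : ℝ)) -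
        ((r - j).choose (s - j) : ℝ) / (r.choose s : ℝ)| ≤ C / n) ∧
    Tendsto (fun n : ℕ =>
        (johnsonEigenvalue n r s j : ℝ) /
          ((r.choose s : ℝ) * ((n - r).choose (r - s) : ℝ)))
      atTop (nhds (((r - j).choose (s - j) : ℝ) / (r.choose s : ℝ))) :=
  stmt_13_general r s j hs hjs
end

section
/- Let 1 ≤ s < r < n be integers with n ≥ 2r + 1. Define λ_0 = C(r,r−s)·C(n−r,r−s) and λ_1 = C(r−1,r−s)·C(n−r−1,r−s) − C(r−1,r−s−1)·C(n−r−1,r−s−1). Then λ_1/λ_0 < s/r. -/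
/-!
With `k = r - s`, the identity `C(r-1, k) · r = C(r, k) · s` gives `C(r-1, k) = (s/r) C(r, k)`.
Dropping the positive subtracted term of `λ_1` and using `C(n-r-1, k) ≤ C(n-r, k)` then yields
`λ_1 < C(r-1, k) C(n-r, k) = (s/r) λ_0`.
-/

theorem Nat.choose_pred_mul_eq (r k : ℕ) : (r - 1).choose k * r = r.choose k * (r - k) := by
  cases r with
  | zero => simp
  | succ r => exact Nat.choose_mul_succ_eq r k

theorem stmt_15_general (n r s : ℕ) (hs : s < r) (hn : 2 * r + 1 ≤ n) :
    (((r - 1).choose (r - s) : ℝ) * ((n - r - 1).choose (r - s) : ℝ) -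
        ((r - 1).choose (r - s - 1) : ℝ) * ((n - r - 1).choose (r - s - 1) : ℝ)) /
      ((r.choose (r - s) : ℝ) * ((n - r).choose (r - s) : ℝ)) <
    (s : ℝ) / (r : ℝ) := by
  have hr : (0 : ℝ) < r := by exact_mod_cast (Nat.zero_lt_of_lt hs)
  have hdeg : (0 : ℝ) < r.choose (r - s) * (n - r).choose (r - s) := by
    have := Nat.choose_pos (n := r) (k := r - s) (by omega)
    have := Nat.choose_pos (n := n - r) (k := r - s) (by omega)
    positivity
  have hcorr : (0 : ℝ) < (r - 1).choose (r - s - 1) * (n - r - 1).choose (r - s - 1) := by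
    have := Nat.choose_pos (n := r - 1) (k := r - s - 1) (by omega)
    have := Nat.choose_pos (n := n - r - 1) (k := r - s - 1) (by omega)
    positivity
  have hpred : ((r - 1).choose (r - s) : ℝ) = s / r * r.choose (r - s) := by
    rw [div_mul_eq_mul_div, eq_div_iff hr.ne']
    exact_mod_cast (Nat.choose_pred_mul_eq r (r - s)).trans (by rw [Nat.sub_sub_self hs.le, mul_comm])
  have hmono : ((n - r - 1).choose (r - s) : ℝ) ≤ (n - r).choose (r - s) := by
    exact_mod_cast Nat.choose_le_choose _ (Nat.sub_le _ _)
  rw [div_lt_iff₀ hdeg]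
  calc _ < ((r - 1).choose (r - s) : ℝ) * (n - r - 1).choose (r - s) := sub_lt_self _ hcorr
    _ ≤ ((r - 1).choose (r - s) : ℝ) * (n - r).choose (r - s) := by gcongr
    _ = s / r * (r.choose (r - s) * (n - r).choose (r - s)) := by rw [hpred, mul_assoc]

/-- For `1 ≤ s < r < n` with `n ≥ 2r+1`: with `λ_0 = C(r,r−s)·C(n−r,r−s)` and
`λ_1 = C(r−1,r−s)·C(n−r−1,r−s) − C(r−1,r−s−1)·C(n−r−1,r−s−1)`, one has `λ_1/λ_0 < s/r`. -/
theorem stmt_15 (n r s : ℕ) (hs1 : 1 ≤ s) (hs : s < r) (hr : r < n) (hn : 2 * r + 1 ≤ n) :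
    (((r - 1).choose (r - s) : ℝ) * ((n - r - 1).choose (r - s) : ℝ) -
        ((r - 1).choose (r - s - 1) : ℝ) * ((n - r - 1).choose (r - s - 1) : ℝ)) /
      ((r.choose (r - s) : ℝ) * ((n - r).choose (r - s) : ℝ)) <
    (s : ℝ) / (r : ℝ) :=
  stmt_15_general n r s hs hn
end

section
/- Let 0 ≤ s < r be fixed integers. Define λ_j(n) = Σ_{ℓ=max{0,j−s}}^{min{j,r−s}} (−1)^ℓ·C(j,ℓ)·C(r−j, r−s−ℓ)·C(n−r−j, r−s−ℓ) and m_j(n) = C(n,j) − C(n,j−1) (with C(n,−1) = 0). Then there exist a constant C > 0 and n0 such that for all n ≥ n0 one has λ_s(n) > 0 and, for every integer t ≥ 2, Σ_{j=s+1}^{r} m_j(n)·|λ_j(n)|^t ≤ (C/n) · m_s(n)·λ_s(n)^t. -/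
open Filter

/-- The multiplicity `m_j = C(n,j) − C(n,j−1)`, with `C(n,−1) = 0`. -/
def johnsonMultiplicity (n j : ℕ) : ℤ :=
  (n.choose j : ℤ) - (if j = 0 then 0 else (n.choose (j - 1) : ℤ))

/-! For fixed `s < r` and large `n`: `m_s ≥ c n^s`; `λ_s ≥ c n^(r-s)`, because its `ℓ = 0` term
`C(n-r-s, r-s)` dominates while every other term is `O(n^(r-s-1))`; and for `s < j ≤ r`,
`m_j ≤ n^j` and `|λ_j| = O(n^(r-j))`, since there `ℓ ≥ j - s`. Writing `d = j - s ≥ 1`, this gives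
`m_j |λ_j|^t ≤ c' A^t n^(d - d t) m_s λ_s^t` for a constant `A`, and `A^t n^(d - d t) ≤ A^2 / n`
as soon as `n ≥ A`. -/

open Finset
open scoped Nat

def johnsonTerm (n r s j ℓ : ℕ) : ℤ :=
  (-1 : ℤ) ^ ℓ * (j.choose ℓ : ℤ) * ((r - j).choose (r - s - ℓ) : ℤ) *
    ((n - r - j).choose (r - s - ℓ) : ℤ)

lemma johnsonEigenvalue_eq_sum (n r s j : ℕ) :
    johnsonEigenvalue n r s j =
      ∑ ℓ ∈ Icc (j - s) (min j (r - s)), johnsonTerm n r s j ℓ :=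
  rfl

lemma johnsonTerm_self_zero (n r s : ℕ) :
    johnsonTerm n r s s 0 = ((n - r - s).choose (r - s) : ℤ) := by
  simp [johnsonTerm]

lemma abs_johnsonTerm_le {n r s j : ℕ} (hj : j ≤ r) (ℓ : ℕ) :
    |johnsonTerm n r s j ℓ| ≤ 2 ^ r * (n : ℤ) ^ (r - s - ℓ) := by
  have h : j.choose ℓ * (r - j).choose (r - s - ℓ) * (n - r - j).choose (r - s - ℓ) ≤
      2 ^ j * 2 ^ (r - j) * n ^ (r - s - ℓ) := by
    gcongr
    · exact Nat.choose_le_two_pow _ _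
    · exact Nat.choose_le_two_pow _ _
    · exact (Nat.choose_le_pow _ _).trans (Nat.pow_le_pow_left (by omega) _)
  rw [← pow_add, Nat.add_sub_cancel' hj] at h
  simp only [johnsonTerm, abs_mul, abs_pow, abs_neg, abs_one, one_pow, one_mul, Nat.abs_cast]
  exact_mod_cast h

lemma abs_sum_johnsonTerm_le {n r s j a : ℕ} (hj : j ≤ r) (hn : 1 ≤ n) (S : Finset ℕ)
    (hS : ∀ ℓ ∈ S, a ≤ ℓ) :
    |∑ ℓ ∈ S, johnsonTerm n r s j ℓ| ≤ #S * (2 ^ r * (n : ℤ) ^ (r - s - a)) := by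
  refine (abs_sum_le_sum_abs _ _).trans ?_
  rw [← nsmul_eq_mul]
  refine sum_le_card_nsmul _ _ _ fun ℓ hℓ => (abs_johnsonTerm_le hj ℓ).trans ?_
  gcongr
  · exact_mod_cast hn
  · have := hS ℓ hℓ
    omega

lemma abs_johnsonEigenvalue_le {n r s j : ℕ} (hsj : s ≤ j) (hj : j ≤ r) (hn : 1 ≤ n) :
    |johnsonEigenvalue n r s j| ≤ (r + 1) * 2 ^ r * (n : ℤ) ^ (r - j) := by
  have h := abs_sum_johnsonTerm_le (s := s) hj hn (Icc (j - s) (min j (r - s)))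
    fun ℓ hℓ => (mem_Icc.1 hℓ).1
  have hcard : #(Icc (j - s) (min j (r - s))) ≤ r + 1 := by
    rw [Nat.card_Icc]
    omega
  rw [show r - s - (j - s) = r - j by omega] at h
  rw [johnsonEigenvalue_eq_sum]
  refine h.trans ?_
  rw [mul_assoc]
  gcongr
  exact_mod_cast hcard

lemma abs_johnsonEigenvalue_self_sub_choose_le {n r s : ℕ} (hs : s ≤ r) (hn : 1 ≤ n) :
    |johnsonEigenvalue n r s s - ((n - r - s).choose (r - s) : ℤ)| ≤
      (r + 1) * 2 ^ r * (n : ℤ) ^ (r - s - 1) := by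
  have h := abs_sum_johnsonTerm_le (s := s) hs hn (Ioc 0 (min s (r - s)))
    fun ℓ hℓ => (mem_Ioc.1 hℓ).1
  have hcard : #(Ioc 0 (min s (r - s))) ≤ r + 1 := by
    rw [Nat.card_Ioc]
    omega
  rw [johnsonEigenvalue_eq_sum, Nat.sub_self, ← sum_Ioc_add_eq_sum_Icc (Nat.zero_le _),
    johnsonTerm_self_zero, add_sub_cancel_right]
  refine h.trans ?_
  rw [mul_assoc]
  gcongr
  exact_mod_cast hcard

lemma johnsonMultiplicity_le_pow (n j : ℕ) : johnsonMultiplicity n j ≤ (n : ℤ) ^ j := by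
  have h : ((n.choose j : ℕ) : ℤ) ≤ (n : ℤ) ^ j := by exact_mod_cast Nat.choose_le_pow n j
  unfold johnsonMultiplicity
  split_ifs <;> linarith [Int.natCast_nonneg (n.choose (j - 1))]

lemma pow_le_two_pow_mul_factorial_mul_choose {n d k : ℕ} (h : 2 * (d + k) ≤ n) :
    n ^ k ≤ 2 ^ k * k ! * (n - d).choose k := by
  calc n ^ k ≤ (2 * (n - d + 1 - k)) ^ k := Nat.pow_le_pow_left (by omega) k
    _ = 2 ^ k * (n - d + 1 - k) ^ k := mul_pow _ _ _
    _ ≤ 2 ^ k * (k ! * (n - d).choose k) := by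
      rw [← Nat.descFactorial_eq_factorial_mul_choose]
      gcongr
      exact Nat.pow_sub_le_descFactorial _ _
    _ = 2 ^ k * k ! * (n - d).choose k := (mul_assoc _ _ _).symm

lemma choose_le_two_mul_johnsonMultiplicity {n j : ℕ} (h : 3 * j ≤ n + 1) :
    (n.choose j : ℤ) ≤ 2 * johnsonMultiplicity n j := by
  rcases j with _ | i
  · simp [johnsonMultiplicity]
  · have hrec := Nat.choose_succ_right_eq n i
    have key : 2 * n.choose i ≤ n.choose (i + 1) := by
      refine Nat.le_of_mul_le_mul_right (c := i + 1) ?_ (by omega)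
      calc 2 * n.choose i * (i + 1) = n.choose i * (2 * (i + 1)) := by ring
        _ ≤ n.choose i * (n - i) := Nat.mul_le_mul_left _ (by omega)
        _ = n.choose (i + 1) * (i + 1) := hrec.symm
    simp only [johnsonMultiplicity, Nat.add_one_ne_zero, if_false, Nat.add_sub_cancel]
    have : (2 * n.choose i : ℤ) ≤ n.choose (i + 1) := by exact_mod_cast key
    linarith

lemma eventually_pow_le_johnsonMultiplicity (s : ℕ) :
    ∀ᶠ n : ℕ in atTop, (n : ℤ) ^ s ≤ 2 ^ (s + 1) * s ! * johnsonMultiplicity n s := by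
  filter_upwards [eventually_ge_atTop (3 * s)] with n hn
  have hpow : (n : ℤ) ^ s ≤ 2 ^ s * s ! * n.choose s := by
    exact_mod_cast pow_le_two_pow_mul_factorial_mul_choose (d := 0) (by omega)
  have hm := choose_le_two_mul_johnsonMultiplicity (n := n) (j := s) (by omega)
  calc (n : ℤ) ^ s ≤ 2 ^ s * s ! * n.choose s := hpow
    _ ≤ 2 ^ s * s ! * (2 * johnsonMultiplicity n s) := by gcongr
    _ = 2 ^ (s + 1) * s ! * johnsonMultiplicity n s := by ring

lemma eventually_pow_le_johnsonEigenvalue_self {r s : ℕ} (hs : s < r) :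
    ∀ᶠ n : ℕ in atTop,
      (n : ℤ) ^ (r - s) ≤ 2 ^ (r - s + 1) * (r - s)! * johnsonEigenvalue n r s s := by
  filter_upwards [eventually_ge_atTop (4 * r + 1),
    eventually_ge_atTop (2 * (2 ^ (r - s) * (r - s)!) * ((r + 1) * 2 ^ r))] with n hn hnK
  have hmain : (n : ℤ) ^ (r - s) ≤ 2 ^ (r - s) * (r - s)! * (n - r - s).choose (r - s) := by
    rw [Nat.sub_sub]
    exact_mod_cast pow_le_two_pow_mul_factorial_mul_choose (by omega)
  have herr := abs_le.1 (abs_johnsonEigenvalue_self_sub_choose_le (n := n) hs.le (by omega))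
  have hgap : 2 * (2 ^ (r - s) * (r - s)!) * ((r + 1) * 2 ^ r * (n : ℤ) ^ (r - s - 1)) ≤
      n ^ (r - s) := by
    calc _ = (2 * (2 ^ (r - s) * (r - s)!) * ((r + 1) * 2 ^ r) : ℕ) * (n : ℤ) ^ (r - s - 1) := by
          push_cast
          ring
      _ ≤ n * (n : ℤ) ^ (r - s - 1) := by gcongr
      _ = n ^ (r - s) := by rw [← pow_succ']; congr 1; omega
  have := mul_le_mul_of_nonneg_left herr.1 (by positivity : (0 : ℤ) ≤ 2 ^ (r - s) * (r - s)!)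
  rw [pow_succ]
  linarith

lemma mul_abs_pow_le_of_le {x A m M μ ν : ℝ} {d t : ℕ} (hx : 1 ≤ x) (hA : 0 ≤ A) (hAx : A ≤ x)
    (hM : 0 ≤ M) (hν : 0 ≤ ν) (hd : 1 ≤ d) (ht : 2 ≤ t) (hm : m ≤ x ^ d * M)
    (hμ : x ^ d * |μ| ≤ A * ν) :
    m * |μ| ^ t ≤ A ^ 2 / x * (M * ν ^ t) := by
  obtain ⟨d, rfl⟩ : ∃ e, d = e + 1 := ⟨d - 1, by omega⟩
  obtain ⟨t, rfl⟩ : ∃ u, t = u + 2 := ⟨t - 2, by omega⟩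
  have hx₀ : 0 < x := by linarith
  have hpow : x ^ (d + 1) * A ^ (t + 2) ≤ A ^ 2 * x ^ (d * t + 2 * d + t + 1) := by
    calc x ^ (d + 1) * A ^ (t + 2) = A ^ 2 * (A ^ t * x ^ (d + 1)) := by ring
      _ ≤ A ^ 2 * (x ^ t * x ^ (d + 1)) := by gcongr
      _ ≤ A ^ 2 * x ^ (d * t + 2 * d + t + 1) := by
        rw [← pow_add]
        exact mul_le_mul_of_nonneg_left (pow_le_pow_right₀ hx (by omega)) (by positivity)
  refine le_of_mul_le_mul_left ?_ (pow_pos hx₀ ((d + 1) * (t + 2)))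
  calc x ^ ((d + 1) * (t + 2)) * (m * |μ| ^ (t + 2))
      ≤ x ^ ((d + 1) * (t + 2)) * (x ^ (d + 1) * M * |μ| ^ (t + 2)) := by gcongr
    _ = x ^ (d + 1) * M * (x ^ (d + 1) * |μ|) ^ (t + 2) := by ring
    _ ≤ x ^ (d + 1) * M * (A * ν) ^ (t + 2) := by gcongr
    _ = M * ν ^ (t + 2) * (x ^ (d + 1) * A ^ (t + 2)) := by ring
    _ ≤ M * ν ^ (t + 2) * (A ^ 2 * x ^ (d * t + 2 * d + t + 1)) := by gcongr
    _ = x ^ ((d + 1) * (t + 2)) * (A ^ 2 / x * (M * ν ^ (t + 2))) := by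
      rw [show (d + 1) * (t + 2) = d * t + 2 * d + t + 1 + 1 by ring, pow_succ]
      field_simp
      ring

lemma johnsonMultiplicity_mul_abs_pow_le {n r s j t : ℕ} {B₁ B₂ : ℝ} (hB₂ : 0 ≤ B₂)
    (hn : 1 ≤ n) (hnB : (r + 1) * 2 ^ r * B₂ ≤ n)
    (hms : (n : ℝ) ^ s ≤ B₁ * johnsonMultiplicity n s)
    (hlam : (n : ℝ) ^ (r - s) ≤ B₂ * johnsonEigenvalue n r s s)
    (hlam₀ : 0 ≤ (johnsonEigenvalue n r s s : ℝ)) (hsj : s < j) (hjr : j ≤ r) (ht : 2 ≤ t) :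
    (johnsonMultiplicity n j : ℝ) * |(johnsonEigenvalue n r s j : ℝ)| ^ t ≤
      ((r + 1) * 2 ^ r * B₂) ^ 2 / n *
        (B₁ * johnsonMultiplicity n s * (johnsonEigenvalue n r s s : ℝ) ^ t) := by
  have hn' : (1 : ℝ) ≤ n := by exact_mod_cast hn
  refine mul_abs_pow_le_of_le (d := j - s) hn' (by positivity) hnB
    ((pow_nonneg (by positivity) s).trans hms) hlam₀ (by omega) ht ?_ ?_
  · calc (johnsonMultiplicity n j : ℝ) ≤ (n : ℝ) ^ j := by
          exact_mod_cast johnsonMultiplicity_le_pow n j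
      _ = n ^ (j - s) * n ^ s := by rw [← pow_add, Nat.sub_add_cancel hsj.le]
      _ ≤ n ^ (j - s) * (B₁ * johnsonMultiplicity n s) := by gcongr
  · calc (n : ℝ) ^ (j - s) * |(johnsonEigenvalue n r s j : ℝ)|
        ≤ n ^ (j - s) * ((r + 1) * 2 ^ r * n ^ (r - j)) := by
          gcongr
          exact_mod_cast abs_johnsonEigenvalue_le hsj.le hjr hn
      _ = (r + 1) * 2 ^ r * n ^ (r - s) := by
          rw [mul_left_comm, ← pow_add, show j - s + (r - j) = r - s by omega]
      _ ≤ (r + 1) * 2 ^ r * (B₂ * johnsonEigenvalue n r s s) := by gcongr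
      _ = (r + 1) * 2 ^ r * B₂ * johnsonEigenvalue n r s s := by ring

/-- For fixed `0 ≤ s < r` there is `C > 0` such that for all large `n`:
`λ_s(n) > 0` and, for every `t ≥ 2`,
`Σ_{j=s+1}^r m_j·|λ_j|^t ≤ (C/n)·m_s·λ_s^t`. -/
theorem stmt_16 (r s : ℕ) (hs : s < r) :
    ∃ C > (0 : ℝ), ∃ n₀ : ℕ, ∀ n ≥ n₀,
      0 < johnsonEigenvalue n r s s ∧
      ∀ t : ℕ, 2 ≤ t →
        ∑ j ∈ Finset.Icc (s + 1) r,
            (johnsonMultiplicity n j : ℝ) * |(johnsonEigenvalue n r s j : ℝ)| ^ t ≤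
          (C / n) * (johnsonMultiplicity n s : ℝ) * (johnsonEigenvalue n r s s : ℝ) ^ t := by
  set B₁ : ℝ := 2 ^ (s + 1) * (s ! : ℝ)
  set B₂ : ℝ := 2 ^ (r - s + 1) * ((r - s)! : ℝ)
  set A : ℝ := (r + 1) * 2 ^ r * B₂
  obtain ⟨n₀, hn₀⟩ := eventually_atTop.1 <| (eventually_pow_le_johnsonMultiplicity s).and <|
    (eventually_pow_le_johnsonEigenvalue_self hs).and <|
      (eventually_ge_atTop ⌈A⌉₊).and (eventually_ge_atTop 1)
  have hr : (0 : ℝ) < r := by exact_mod_cast hs.pos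
  refine ⟨r * B₁ * A ^ 2, by positivity, n₀, fun n hn => ?_⟩
  obtain ⟨hms, hlam, hnA, hn1⟩ := hn₀ n hn
  have hms' : (n : ℝ) ^ s ≤ B₁ * johnsonMultiplicity n s := by
    simp only [B₁]
    exact_mod_cast hms
  have hlam' : (n : ℝ) ^ (r - s) ≤ B₂ * johnsonEigenvalue n r s s := by
    simp only [B₂]
    exact_mod_cast hlam
  have hlam₀ : (0 : ℝ) < johnsonEigenvalue n r s s :=
    pos_of_mul_pos_right ((by positivity : (0 : ℝ) < n ^ (r - s)).trans_le hlam') (by positivity)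
  refine ⟨by exact_mod_cast hlam₀, fun t ht => ?_⟩
  calc ∑ j ∈ Icc (s + 1) r, (johnsonMultiplicity n j : ℝ) * |(johnsonEigenvalue n r s j : ℝ)| ^ t
      ≤ ∑ j ∈ Icc (s + 1) r, A ^ 2 / n *
          (B₁ * johnsonMultiplicity n s * (johnsonEigenvalue n r s s : ℝ) ^ t) :=
        sum_le_sum fun j hj => johnsonMultiplicity_mul_abs_pow_le (by positivity) hn1
          (Nat.ceil_le.1 hnA) hms' hlam' hlam₀.le (mem_Icc.1 hj).1 (mem_Icc.1 hj).2 ht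
    _ ≤ r * (A ^ 2 / n *
          (B₁ * johnsonMultiplicity n s * (johnsonEigenvalue n r s s : ℝ) ^ t)) := by
        rw [sum_const, Nat.card_Icc, nsmul_eq_mul]
        refine mul_le_mul_of_nonneg_right (by exact_mod_cast (by omega : r + 1 - (s + 1) ≤ r)) ?_
        exact mul_nonneg (by positivity)
          (mul_nonneg ((pow_nonneg (by positivity) s).trans hms') (by positivity))
    _ = r * B₁ * A ^ 2 / n * johnsonMultiplicity n s * (johnsonEigenvalue n r s s : ℝ) ^ t := by
        ring
end
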